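/- arXiv:1602.05541 — 2 statements merged into one kernel-verified Lean document; each statement's English description precedes it below -/
import Mathlib

section
/- For α ∈ (1,2) and q ≥ 0, the integral ∫₀^∞ (e^{-qζ} - 1 + qζ) · (-1/(cos(πα/2)·Γ(-α)·ζ^{1+α})) dζ equals -q^α/cos(πα/2). -/
/-!
Two integrations by parts against `x ^ (-s - 1)` lower the compensated integrand
`e^{-x} - 1 + x` to `1 - e^{-x}` and then to `e^{-x}`, so that
`∫₀^∞ (e^{-x} - 1 + x) x^{-α-1} dx = Γ(2 - α) / (α (α - 1)) = Γ(-α)`. The substitution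
`x ↦ q x` contributes the factor `q ^ α`, and the constant `-1 / (cos (πα/2) Γ(-α))` then
cancels `Γ(-α)`.
-/

open Real MeasureTheory Set Filter Topology

lemma exp_neg_sub_one_add_nonneg (x : ℝ) : 0 ≤ exp (-x) - 1 + x := by
  linarith [add_one_le_exp (-x)]

lemma exp_neg_sub_one_add_le_sq {x : ℝ} (hx : 0 ≤ x) : exp (-x) - 1 + x ≤ x ^ 2 := by
  have h : (1 + x) * exp (-x) ≤ 1 := by
    rw [exp_neg, mul_inv_le_iff₀ (exp_pos x)]
    linarith [add_one_le_exp x]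
  nlinarith [one_sub_le_exp_neg x]

lemma integrableOn_Ioi_zero_of_norm_le_rpow {f : ℝ → ℝ} {p r : ℝ}
    (hp : -1 < p) (hr : r < -1) (hf : ContinuousOn f (Ioi 0))
    (h₀ : ∀ x ∈ Ioc (0 : ℝ) 1, ‖f x‖ ≤ x ^ p) (h₁ : ∀ x ∈ Ioi (1 : ℝ), ‖f x‖ ≤ x ^ r) :
    IntegrableOn f (Ioi 0) := by
  have hm := hf.aestronglyMeasurable (μ := volume) measurableSet_Ioi
  rw [← Ioc_union_Ioi_eq_Ioi zero_le_one, integrableOn_union]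
  constructor
  · have hg : IntegrableOn (fun x : ℝ => x ^ p) (Ioc 0 1) :=
      (intervalIntegrable_iff_integrableOn_Ioc_of_le zero_le_one).mp
        (intervalIntegral.intervalIntegrable_rpow' hp)
    refine hg.mono' (hm.mono_set Ioc_subset_Ioi_self) ?_
    filter_upwards [ae_restrict_mem measurableSet_Ioc] with x hx using h₀ x hx
  · refine (integrableOn_Ioi_rpow_of_lt hr one_pos).mono'
      (hm.mono_set (Ioi_subset_Ioi zero_le_one)) ?_
    filter_upwards [ae_restrict_mem measurableSet_Ioi] with x hx using h₁ x hx

/-- Such a `u` can be integrated against `x ^ (-s - 1)` on `(0, ∞)` whenever `k - 1 < s < k`. -/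
def PowerSandwiched (u : ℝ → ℝ) (k : ℝ) : Prop :=
  ∀ x > 0, 0 ≤ u x ∧ u x ≤ x ^ k ∧ u x ≤ x ^ (k - 1)

lemma powerSandwiched_one_sub_exp_neg : PowerSandwiched (fun x => 1 - exp (-x)) 1 := by
  intro x hx
  refine ⟨by simpa using hx.le, ?_, ?_⟩
  · rw [rpow_one]; linarith [one_sub_le_exp_neg x]
  · rw [sub_self, rpow_zero]; linarith [exp_pos (-x)]

lemma powerSandwiched_exp_neg_sub_one_add : PowerSandwiched (fun x => exp (-x) - 1 + x) 2 := by
  intro x hx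
  refine ⟨exp_neg_sub_one_add_nonneg x, ?_, ?_⟩
  · rw [rpow_two]; exact exp_neg_sub_one_add_le_sq hx.le
  · norm_num; linarith [one_sub_le_exp_neg x, exp_pos (-x)]

namespace PowerSandwiched

variable {u : ℝ → ℝ} {k s : ℝ}

lemma integrableOn_mul_rpow_neg_sub_one (hu : PowerSandwiched u k)
    (hcont : ContinuousOn u (Ioi 0)) (hks : k - 1 < s) (hsk : s < k) :
    IntegrableOn (fun x => u x * x ^ (-s - 1)) (Ioi 0) := by
  refine integrableOn_Ioi_zero_of_norm_le_rpow (p := k - s - 1) (r := k - s - 2)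
    (by linarith) (by linarith)
    (hcont.mul (continuousOn_id.rpow_const fun x hx => Or.inl (ne_of_gt hx))) ?_ ?_
  · intro x ⟨hx, _⟩
    rw [norm_of_nonneg (mul_nonneg (hu x hx).1 (rpow_nonneg hx.le _)),
      show k - s - 1 = k + (-s - 1) by ring, rpow_add hx]
    exact mul_le_mul_of_nonneg_right (hu x hx).2.1 (rpow_nonneg hx.le _)
  · intro x (hx : 1 < x)
    have hx₀ : 0 < x := one_pos.trans hx
    rw [norm_of_nonneg (mul_nonneg (hu x hx₀).1 (rpow_nonneg hx₀.le _)),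
      show k - s - 2 = (k - 1) + (-s - 1) by ring, rpow_add hx₀]
    exact mul_le_mul_of_nonneg_right (hu x hx₀).2.2 (rpow_nonneg hx₀.le _)

lemma tendsto_mul_rpow_neg_nhdsGT_zero (hu : PowerSandwiched u k) (hsk : s < k) :
    Tendsto (fun x => u x * x ^ (-s)) (𝓝[>] 0) (𝓝 0) := by
  have hlim : Tendsto (fun x : ℝ => x ^ (k - s)) (𝓝[>] 0) (𝓝 0) := by
    simpa [zero_rpow (sub_pos.mpr hsk).ne'] using
      ((continuousAt_rpow_const 0 (k - s) (Or.inr (sub_pos.mpr hsk).le)).tendsto).mono_left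
        nhdsWithin_le_nhds
  refine squeeze_zero' ?_ ?_ hlim <;> filter_upwards [self_mem_nhdsWithin] with x (hx : 0 < x)
  · exact mul_nonneg (hu x hx).1 (rpow_nonneg hx.le _)
  · rw [sub_eq_add_neg, rpow_add hx]
    exact mul_le_mul_of_nonneg_right (hu x hx).2.1 (rpow_nonneg hx.le _)

lemma tendsto_mul_rpow_neg_atTop (hu : PowerSandwiched u k) (hks : k - 1 < s) :
    Tendsto (fun x => u x * x ^ (-s)) atTop (𝓝 0) := by
  have hlim : Tendsto (fun x : ℝ => x ^ (-(s - (k - 1)))) atTop (𝓝 0) :=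
    tendsto_rpow_neg_atTop (sub_pos.mpr hks)
  refine squeeze_zero' ?_ ?_ hlim <;> filter_upwards [Ioi_mem_atTop 0] with x (hx : 0 < x)
  · exact mul_nonneg (hu x hx).1 (rpow_nonneg hx.le _)
  · rw [show -(s - (k - 1)) = (k - 1) + -s by ring, rpow_add hx]
    exact mul_le_mul_of_nonneg_right (hu x hx).2.2 (rpow_nonneg hx.le _)

/-- Integration by parts with `v = x ^ (-s) / (-s)`; the boundary terms vanish. -/
lemma integral_mul_rpow_neg_sub_one_eq {u' : ℝ → ℝ} (hu : PowerSandwiched u k)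
    (hderiv : ∀ x ∈ Ioi (0 : ℝ), HasDerivAt u (u' x) x) (hks : k - 1 < s) (hsk : s < k)
    (hs : s ≠ 0) (hu' : IntegrableOn (fun x => u' x * x ^ (-s)) (Ioi 0)) :
    ∫ x in Ioi 0, u x * x ^ (-s - 1) = (∫ x in Ioi 0, u' x * x ^ (-s)) / s := by
  have hv : ∀ x ∈ Ioi (0 : ℝ), HasDerivAt (fun y => y ^ (-s) / (-s)) (x ^ (-s - 1)) x := by
    intro x hx
    have h := (hasDerivAt_rpow_const (p := -s) (Or.inl (ne_of_gt hx))).div_const (-s)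
    rwa [mul_div_cancel_left₀ _ (neg_ne_zero.mpr hs)] at h
  have hcont : ContinuousOn u (Ioi 0) := fun x hx => (hderiv x hx).continuousAt.continuousWithinAt
  have huv : (fun x => u x * (x ^ (-s) / (-s))) = fun x => -(u x * x ^ (-s)) / s := by
    ext x; field_simp
  have hu'v : (fun x => u' x * (x ^ (-s) / (-s))) = fun x => -(u' x * x ^ (-s)) / s := by
    ext x; field_simp
  have hparts := integral_Ioi_mul_deriv_eq_deriv_mul hderiv hv
    (hu.integrableOn_mul_rpow_neg_sub_one hcont hks hsk)
    (by rw [Pi.mul_def, hu'v]; exact hu'.neg.div_const s)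
    (by simpa only [Pi.mul_def, huv, neg_zero, zero_div] using
      ((hu.tendsto_mul_rpow_neg_nhdsGT_zero hsk).neg.div_const s))
    (by simpa only [Pi.mul_def, huv, neg_zero, zero_div] using
      ((hu.tendsto_mul_rpow_neg_atTop hks).neg.div_const s))
  rw [hparts, hu'v, integral_div, integral_neg]
  ring

end PowerSandwiched

lemma Gamma_one_sub_eq_neg_mul {s : ℝ} (hs : s ≠ 0) : Gamma (1 - s) = -s * Gamma (-s) := by
  rw [← Gamma_add_one (neg_ne_zero.mpr hs), neg_add_eq_sub]

lemma integral_one_sub_exp_neg_mul_rpow {s : ℝ} (hs₀ : 0 < s) (hs₁ : s < 1) :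
    ∫ x in Ioi 0, (1 - exp (-x)) * x ^ (-s - 1) = -Gamma (-s) := by
  have hexp : ∫ x in Ioi 0, exp (-x) * x ^ (-s) = Gamma (1 - s) := by
    rw [Gamma_eq_integral (by linarith), sub_sub_cancel_left]
  have hexp_int : IntegrableOn (fun x => exp (-x) * x ^ (-s)) (Ioi 0) := by
    simpa only [sub_sub_cancel_left] using GammaIntegral_convergent (s := 1 - s) (by linarith)
  rw [powerSandwiched_one_sub_exp_neg.integral_mul_rpow_neg_sub_one_eq
      (fun x _ => by simpa using ((hasDerivAt_neg x).exp).const_sub 1)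
      (by linarith) hs₁ hs₀.ne' hexp_int,
    hexp, Gamma_one_sub_eq_neg_mul hs₀.ne']
  field_simp

lemma integral_exp_neg_sub_one_add_mul_rpow {s : ℝ} (hs₁ : 1 < s) (hs₂ : s < 2) :
    ∫ x in Ioi 0, (exp (-x) - 1 + x) * x ^ (-s - 1) = Gamma (-s) := by
  have hs_sub : -(s - 1) - 1 = -s := by ring
  have hone_sub : ∫ x in Ioi 0, (1 - exp (-x)) * x ^ (-s) = -Gamma (1 - s) := by
    have h := integral_one_sub_exp_neg_mul_rpow (s := s - 1) (by linarith) (by linarith)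
    rwa [hs_sub, neg_sub] at h
  have hone_sub_int : IntegrableOn (fun x => (1 - exp (-x)) * x ^ (-s)) (Ioi 0) := by
    simpa only [hs_sub] using powerSandwiched_one_sub_exp_neg.integrableOn_mul_rpow_neg_sub_one
      (s := s - 1) (by fun_prop) (by linarith) (by linarith)
  rw [powerSandwiched_exp_neg_sub_one_add.integral_mul_rpow_neg_sub_one_eq
      (fun x _ => ((((hasDerivAt_neg x).exp).sub_const 1).add (hasDerivAt_id' x)).congr_deriv
        (by ring))
      (by linarith) hs₂ (by linarith) hone_sub_int,
    hone_sub, Gamma_one_sub_eq_neg_mul (by linarith)]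
  field_simp

lemma integral_comp_mul_left_mul_rpow (f : ℝ → ℝ) {q : ℝ} (hq : 0 < q) (s : ℝ) :
    ∫ x in Ioi 0, f (q * x) * x ^ (-s - 1) = q ^ s * ∫ x in Ioi 0, f x * x ^ (-s - 1) := by
  have hscale : EqOn (fun x => f (q * x) * x ^ (-s - 1))
      (fun x => q ^ (s + 1) * (f (q * x) * (q * x) ^ (-s - 1))) (Ioi 0) := by
    intro x (hx : 0 < x)
    dsimp only
    rw [mul_rpow hq.le hx.le, show -s - 1 = -(s + 1) by ring, rpow_neg hq.le]
    field_simp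
  rw [setIntegral_congr_fun measurableSet_Ioi hscale, integral_const_mul,
    integral_comp_mul_left_Ioi (fun y => f y * y ^ (-s - 1)) 0 hq, mul_zero, smul_eq_mul,
    rpow_add_one hq.ne']
  field_simp

/-- For `α ∈ (1,2)` and `q ≥ 0`,
`∫₀^∞ (e^{-qζ} - 1 + qζ) · (-1/(cos(πα/2)·Γ(-α)·ζ^{1+α})) dζ = -q^α / cos(πα/2)`. -/
theorem stmt0 (α q : ℝ) (hα : α ∈ Set.Ioo (1:ℝ) 2) (hq : 0 ≤ q) :
    ∫ ζ in Set.Ioi (0:ℝ),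
      (Real.exp (-q * ζ) - 1 + q * ζ) *
        (-1 / (Real.cos (π * α / 2) * Real.Gamma (-α) * ζ ^ (1 + α))) =
      -q ^ α / Real.cos (π * α / 2) := by
  obtain ⟨hα₁, hα₂⟩ := hα
  rcases hq.eq_or_lt with rfl | hq
  · simp [zero_rpow (by linarith : α ≠ 0)]
  have hGamma : Gamma (-α) ≠ 0 := by
    refine Gamma_ne_zero fun m hm => ?_
    have h₁ : 1 < m := by exact_mod_cast (neg_inj.mp hm ▸ hα₁)
    have h₂ : m < 2 := by exact_mod_cast (neg_inj.mp hm ▸ hα₂)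
    omega
  have hintegrand : EqOn
      (fun ζ => (exp (-q * ζ) - 1 + q * ζ) *
        (-1 / (cos (π * α / 2) * Gamma (-α) * ζ ^ (1 + α))))
      (fun ζ => -1 / (cos (π * α / 2) * Gamma (-α)) *
        ((exp (-(q * ζ)) - 1 + q * ζ) * ζ ^ (-α - 1)))
      (Ioi 0) := by
    intro ζ (hζ : 0 < ζ)
    simp only [neg_mul, show -α - 1 = -(1 + α) by ring, rpow_neg hζ.le]
    field_simp
  rw [setIntegral_congr_fun measurableSet_Ioi hintegrand, integral_const_mul,
    integral_comp_mul_left_mul_rpow (fun y => exp (-y) - 1 + y) hq,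
    integral_exp_neg_sub_one_add_mul_rpow hα₁ hα₂]
  field_simp
end

section
/- Let a > 0, b, r₀ ≥ 0, and let v_α : [0,∞) → [0,∞) be defined for α ∈ (1,2] as the inverse of f_α(t) = ∫₀^t dx/(1-Ψ_α(x)) on [0, x₀(α)), where Ψ_α(q) = aq + (σ²/2)q² - (σ_Z^α/cos(πα/2))q^α and x₀(α) is the root of Ψ_α = 1. If 1 < α₁ ≤ α₂ ≤ 2 then v_{α₁}(t) ≤ v_{α₂}(t) for all t ≥ 0; consequently the bond price B(0,T) = exp(-r₀ v_α(T) - ab∫₀^T v_α(s) ds) is nonincreasing in α. -/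
/-!
For `α ∈ (1, 2]` we have `cos (π α / 2) < 0`, so on `q ≥ 0` the branching mechanism is
`Ψ_α(q) = a q + σ² q² / 2 + (σ_Z q)^α / |cos (π α / 2)|`, a strictly increasing function.
As long as `σ_Z q ≤ 1`, both `(σ_Z q)^α` and `1 / |cos (π α / 2)|` decrease in `α`, hence so
does `Ψ_α(q)`; since `|cos| ≤ 1`, the root `x₀(α)` of `Ψ_α = 1` satisfies `σ_Z x₀(α) ≤ 1`. Thus on `[0, v_{α₁}(t)]`
the integrand `1 / (1 - Ψ_{α₂})` is positive and dominated by `1 / (1 - Ψ_{α₁})`, and the two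
integrals being both equal to `t` forces `v_{α₁}(t) ≤ v_{α₂}(t)`. Monotonicity of the bond price
follows since it is a decreasing function of `v_α`.
-/

open Real Set MeasureTheory

theorem le_of_intervalIntegral_eq_of_le {f g : ℝ → ℝ} {c x y : ℝ} (hy : c ≤ y)
    (hf : ContinuousOn f (Icc c x)) (hg : ContinuousOn g (Icc c x))
    (hg_pos : ∀ z ∈ Icc c x, 0 < g z) (hgf : ∀ z ∈ Icc c x, g z ≤ f z)
    (h : ∫ z in c..x, f z = ∫ z in c..y, g z) : x ≤ y := by
  by_contra! hyx
  have hcx : c ≤ x := hy.trans hyx.le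
  have hg_cy : IntervalIntegrable g volume c y :=
    (hg.mono (Icc_subset_Icc le_rfl hyx.le)).intervalIntegrable_of_Icc hy
  have hg_yx : IntervalIntegrable g volume y x :=
    (hg.mono (Icc_subset_Icc hy le_rfl)).intervalIntegrable_of_Icc hyx.le
  have hsplit : (∫ z in c..y, g z) + ∫ z in y..x, g z = ∫ z in c..x, g z :=
    intervalIntegral.integral_add_adjacent_intervals hg_cy hg_yx
  have htail : 0 < ∫ z in y..x, g z :=
    intervalIntegral.intervalIntegral_pos_of_pos_on hg_yx
      (fun z hz => hg_pos z ⟨hy.trans hz.1.le, hz.2.le⟩) hyx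
  have hmono : ∫ z in c..x, g z ≤ ∫ z in c..x, f z :=
    intervalIntegral.integral_mono_on hcx (hg.intervalIntegrable_of_Icc hcx)
      (hf.intervalIntegrable_of_Icc hcx) hgf
  linarith

theorem neg_cos_pi_mul_div_two_pos {α : ℝ} (hα : α ∈ Ioo 1 3) : 0 < -cos (π * α / 2) :=
  neg_pos.2 <| cos_neg_of_pi_div_two_lt_of_lt (by nlinarith [pi_pos, hα.1])
    (by nlinarith [pi_pos, hα.2])

theorem neg_cos_pi_mul_div_two_le {α₁ α₂ : ℝ} (h1 : 1 ≤ α₁) (h12 : α₁ ≤ α₂) (h22 : α₂ ≤ 2) :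
    -cos (π * α₁ / 2) ≤ -cos (π * α₂ / 2) :=
  neg_le_neg <| cos_le_cos_of_nonneg_of_le_pi (by nlinarith [pi_pos]) (by nlinarith [pi_pos])
    (by nlinarith [pi_pos])

noncomputable def branchingMechanism (a σ σZ α q : ℝ) : ℝ :=
  a * q + σ ^ 2 / 2 * q ^ 2 - σZ ^ α / cos (π * α / 2) * q ^ α

section BranchingMechanism

variable {a σ σZ α q : ℝ}

theorem branchingMechanism_eq (hσZ : 0 ≤ σZ) (hq : 0 ≤ q) :
    branchingMechanism a σ σZ α q =
      a * q + σ ^ 2 / 2 * q ^ 2 + (σZ * q) ^ α / -cos (π * α / 2) := by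
  rw [branchingMechanism, mul_rpow hσZ hq, div_neg]
  ring

theorem continuous_branchingMechanism (hα : 0 ≤ α) :
    Continuous (branchingMechanism a σ σZ α) :=
  ((continuous_const.mul continuous_id).add (continuous_const.mul (continuous_pow 2))).sub
    (continuous_const.mul (continuous_rpow_const hα))

theorem branchingMechanism_strictMonoOn (ha : 0 < a) (hσZ : 0 ≤ σZ) (hα : α ∈ Ioo 1 3) :
    StrictMonoOn (branchingMechanism a σ σZ α) (Ici 0) := by
  intro x hx y hy hxy
  rw [mem_Ici] at hx hy
  rw [branchingMechanism_eq hσZ hx, branchingMechanism_eq hσZ hy]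
  have hpow : (σZ * x) ^ α ≤ (σZ * y) ^ α :=
    rpow_le_rpow (by positivity) (mul_le_mul_of_nonneg_left hxy.le hσZ) (by linarith [hα.1])
  have hsq : σ ^ 2 / 2 * x ^ 2 ≤ σ ^ 2 / 2 * y ^ 2 := by gcongr
  have hjump := div_le_div_of_nonneg_right hpow (neg_cos_pi_mul_div_two_pos hα).le
  linarith [mul_lt_mul_of_pos_left hxy ha]

theorem mul_le_one_of_branchingMechanism_eq_one (ha : 0 ≤ a) (hσZ : 0 ≤ σZ)
    (hα : α ∈ Ioo 1 3) (hq : 0 ≤ q) (h : branchingMechanism a σ σZ α q = 1) : σZ * q ≤ 1 := by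
  by_contra! hgt
  rw [branchingMechanism_eq hσZ hq] at h
  have hcos := neg_cos_pi_mul_div_two_pos hα
  have hpow : 1 < (σZ * q) ^ α := one_lt_rpow hgt (by linarith [hα.1])
  have hjump : 1 < (σZ * q) ^ α / -cos (π * α / 2) :=
    (one_lt_div hcos).2 (by linarith [neg_one_le_cos (π * α / 2)])
  nlinarith [mul_nonneg ha hq, sq_nonneg σ, sq_nonneg q, mul_nonneg (sq_nonneg σ) (sq_nonneg q)]

theorem branchingMechanism_le_of_exponent_le {α₁ α₂ : ℝ} (hσZ : 0 ≤ σZ) (h1 : 1 < α₁)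
    (h12 : α₁ ≤ α₂) (h22 : α₂ ≤ 2) (hq : 0 ≤ q) (hq1 : σZ * q ≤ 1) :
    branchingMechanism a σ σZ α₂ q ≤ branchingMechanism a σ σZ α₁ q := by
  rw [branchingMechanism_eq hσZ hq, branchingMechanism_eq hσZ hq]
  have hpow : (σZ * q) ^ α₂ ≤ (σZ * q) ^ α₁ :=
    rpow_le_rpow_of_exponent_ge' (by positivity) hq1 (by linarith) h12
  exact add_le_add_right (div_le_div₀ (by positivity) hpow
    (neg_cos_pi_mul_div_two_pos ⟨h1, by linarith⟩) (neg_cos_pi_mul_div_two_le h1.le h12 h22)) _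

end BranchingMechanism

theorem le_of_integral_inv_one_sub_branchingMechanism_eq {a σ σZ α₁ α₂ x₀ V₁ V₂ : ℝ}
    (ha : 0 < a) (hσZ : 0 ≤ σZ) (h1 : 1 < α₁) (h12 : α₁ ≤ α₂) (h22 : α₂ ≤ 2)
    (hx₀ : branchingMechanism a σ σZ α₁ x₀ = 1) (hV₁ : V₁ ∈ Ico 0 x₀) (hV₂ : 0 ≤ V₂)
    (h : ∫ x in (0:ℝ)..V₁, 1 / (1 - branchingMechanism a σ σZ α₁ x) =
      ∫ x in (0:ℝ)..V₂, 1 / (1 - branchingMechanism a σ σZ α₂ x)) :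
    V₁ ≤ V₂ := by
  have hα₁ : α₁ ∈ Ioo 1 3 := ⟨h1, by linarith⟩
  have hx₀_nonneg : 0 ≤ x₀ := hV₁.1.trans hV₁.2.le
  have hlt : ∀ x ∈ Icc 0 V₁, branchingMechanism a σ σZ α₁ x < 1 := fun x hx =>
    hx₀ ▸ branchingMechanism_strictMonoOn ha hσZ hα₁ hx.1 hx₀_nonneg (hx.2.trans_lt hV₁.2)
  have hle : ∀ x ∈ Icc 0 V₁,
      branchingMechanism a σ σZ α₂ x ≤ branchingMechanism a σ σZ α₁ x := fun x hx =>
    branchingMechanism_le_of_exponent_le hσZ h1 h12 h22 hx.1 <|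
      (mul_le_mul_of_nonneg_left (hx.2.trans hV₁.2.le) hσZ).trans
        (mul_le_one_of_branchingMechanism_eq_one ha.le hσZ hα₁ hx₀_nonneg hx₀)
  have hcont : ∀ α, 0 ≤ α → (∀ x ∈ Icc 0 V₁, branchingMechanism a σ σZ α x < 1) →
      ContinuousOn (fun x => 1 / (1 - branchingMechanism a σ σZ α x)) (Icc 0 V₁) :=
    fun α hα hα_lt => continuousOn_const.div
      (continuous_const.sub (continuous_branchingMechanism hα)).continuousOn
      fun x hx => (sub_pos.2 (hα_lt x hx)).ne'
  have hlt₂ : ∀ x ∈ Icc 0 V₁, branchingMechanism a σ σZ α₂ x < 1 := fun x hx =>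
    (hle x hx).trans_lt (hlt x hx)
  exact le_of_intervalIntegral_eq_of_le hV₂ (hcont α₁ (by linarith) hlt)
    (hcont α₂ (by linarith) hlt₂) (fun x hx => one_div_pos.2 (sub_pos.2 (hlt₂ x hx)))
    (fun x hx => one_div_le_one_div_of_le (sub_pos.2 (hlt x hx)) (by linarith [hle x hx])) h

theorem stmt18_general (a b σ σZ r₀ : ℝ) (ha : 0 < a) (hb : 0 ≤ b) (hσZ : 0 < σZ)
    (hr₀ : 0 ≤ r₀)
    (Ψ : ℝ → ℝ → ℝ)
    (hΨ : ∀ α ∈ Set.Ioc (1:ℝ) 2, ∀ q,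
      Ψ α q = a * q + σ ^ 2 / 2 * q ^ 2 - σZ ^ α / Real.cos (π * α / 2) * q ^ α)
    (x₀ : ℝ → ℝ)
    (hx₀ : ∀ α ∈ Set.Ioc (1:ℝ) 2, 0 < x₀ α ∧ Ψ α (x₀ α) = 1)
    (v : ℝ → ℝ → ℝ)
    (hvcont : ∀ α ∈ Set.Ioc (1:ℝ) 2, ContinuousOn (v α) (Set.Ici 0))
    (hv : ∀ α ∈ Set.Ioc (1:ℝ) 2, ∀ t ≥ (0:ℝ),
      v α t ∈ Set.Ico 0 (x₀ α) ∧ (∫ x in (0:ℝ)..(v α t), 1 / (1 - Ψ α x)) = t) :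
    ∀ α₁ α₂ : ℝ, 1 < α₁ → α₁ ≤ α₂ → α₂ ≤ 2 →
      (∀ t ≥ (0:ℝ), v α₁ t ≤ v α₂ t) ∧
      (∀ T ≥ (0:ℝ),
        Real.exp (-r₀ * v α₂ T - a * b * ∫ s in (0:ℝ)..T, v α₂ s) ≤
          Real.exp (-r₀ * v α₁ T - a * b * ∫ s in (0:ℝ)..T, v α₁ s)) := by
  intro α₁ α₂ h1 h12 h22
  have hα₁ : α₁ ∈ Ioc (1:ℝ) 2 := ⟨h1, h12.trans h22⟩
  have hα₂ : α₂ ∈ Ioc (1:ℝ) 2 := ⟨h1.trans_le h12, h22⟩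
  have hΨ_eq : ∀ α ∈ Ioc (1:ℝ) 2, Ψ α = branchingMechanism a σ σZ α :=
    fun α hα => funext (hΨ α hα)
  have hmono : ∀ t ≥ (0:ℝ), v α₁ t ≤ v α₂ t := by
    intro t ht
    obtain ⟨hV₁, hI₁⟩ := hv α₁ hα₁ t ht
    obtain ⟨⟨hV₂, -⟩, hI₂⟩ := hv α₂ hα₂ t ht
    have hroot := (hx₀ α₁ hα₁).2
    rw [hΨ_eq α₁ hα₁] at hI₁ hroot
    rw [hΨ_eq α₂ hα₂] at hI₂
    exact le_of_integral_inv_one_sub_branchingMechanism_eq ha hσZ.le h1 h12 h22 hroot hV₁ hV₂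
      (hI₁.trans hI₂.symm)
  refine ⟨hmono, fun T hT => exp_le_exp.2 ?_⟩
  have hint (α : ℝ) (hα : α ∈ Ioc (1:ℝ) 2) : IntervalIntegrable (v α) volume 0 T :=
    ((hvcont α hα).mono Icc_subset_Ici_self).intervalIntegrable_of_Icc hT
  have hI : ∫ s in (0:ℝ)..T, v α₁ s ≤ ∫ s in (0:ℝ)..T, v α₂ s :=
    intervalIntegral.integral_mono_on hT (hint α₁ hα₁) (hint α₂ hα₂) fun s hs => hmono s hs.1
  nlinarith [mul_le_mul_of_nonneg_left (hmono T hT) hr₀,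
    mul_le_mul_of_nonneg_left hI (mul_nonneg ha.le hb)]

/-- Monotonicity in `α` of the function `v_α` solving `f_α(v_α(t)) = t`, and hence
the bond price `B(0,T) = exp(-r₀ v_α(T) - ab ∫₀^T v_α)` is nonincreasing in `α`. -/
theorem stmt18 (a b σ σZ r₀ : ℝ) (ha : 0 < a) (hb : 0 ≤ b) (hσ : 0 ≤ σ) (hσZ : 0 < σZ)
    (hr₀ : 0 ≤ r₀)
    (Ψ : ℝ → ℝ → ℝ)
    (hΨ : ∀ α ∈ Set.Ioc (1:ℝ) 2, ∀ q,
      Ψ α q = a * q + σ ^ 2 / 2 * q ^ 2 - σZ ^ α / Real.cos (π * α / 2) * q ^ α)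
    (x₀ : ℝ → ℝ)
    (hx₀ : ∀ α ∈ Set.Ioc (1:ℝ) 2, 0 < x₀ α ∧ Ψ α (x₀ α) = 1)
    (v : ℝ → ℝ → ℝ)
    (hvcont : ∀ α ∈ Set.Ioc (1:ℝ) 2, ContinuousOn (v α) (Set.Ici 0))
    (hv : ∀ α ∈ Set.Ioc (1:ℝ) 2, ∀ t ≥ (0:ℝ),
      v α t ∈ Set.Ico 0 (x₀ α) ∧ (∫ x in (0:ℝ)..(v α t), 1 / (1 - Ψ α x)) = t) :
    ∀ α₁ α₂ : ℝ, 1 < α₁ → α₁ ≤ α₂ → α₂ ≤ 2 →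
      (∀ t ≥ (0:ℝ), v α₁ t ≤ v α₂ t) ∧
      (∀ T ≥ (0:ℝ),
        Real.exp (-r₀ * v α₂ T - a * b * ∫ s in (0:ℝ)..T, v α₂ s) ≤
          Real.exp (-r₀ * v α₁ T - a * b * ∫ s in (0:ℝ)..T, v α₁ s)) :=
  stmt18_general a b σ σZ r₀ ha hb hσZ hr₀ Ψ hΨ x₀ hx₀ v hvcont hv
end
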